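/- (Lemma 4.1.) Let n ≥ 2, let Q = diag(q_1,…,q_n) with q_i > 0, let L_c ∈ ℝ^{n×n} be the Laplacian of a connected undirected graph (symmetric, nonpositive off-diagonal entries, L_c𝟙 = 0, ker(L_c) = span{𝟙}), and let B ∈ ℝ^{n×m} with ker(Bᵀ) = span{𝟙}. Let γ_c, γ_e, γ_p, γ_l > 0, set γ := γ_p²γ_c/γ_l, let d, x̄_s, r ∈ ℝ^n, d̃ := d − x̄_s − Q^{-1}r, Q̄ := Q^{-1}𝟙𝟙ᵀQ^{-1}/(𝟙ᵀQ^{-1}𝟙) − Q^{-1}, Φ := −L_cQ + (1/n)𝟙𝟙ᵀ (the matrix γQ̄ + Φ being invertible), and let x̄_e ∈ ℝ^m be any vector with γ_e B x̄_e = −Q̄Q d̃. Define x̂_p := (γ/γ_p) Q (γQ̄ + Φ)^{-1} Q̄² Q d̃ and x̂ := γ_c (𝟙𝟙ᵀQ^{-1}/(𝟙ᵀQ^{-1}𝟙)) (I − γ(γQ̄ + Φ)^{-1} Q̄) Q̄ Q d̃. Then there exists x̂_e ∈ ℝ^m such that the triple (x̂, x̂_e, x̂_p) satisfies: (i) Bᵀ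 x̂ = 0; (ii) −γ_e B x̂_e + γ_p Q^{-1} x̂_p = 0; (iii) −γ_p Q^{-1} x̂ − γ_l L_c x̂_p − γ_p γ_c γ_e Q^{-1} B (x̂_e + x̄_e) = 0. -/

import Mathlib

open Matrix Filter

/-- Euclidean norm on `Fin k → ℝ`. -/
noncomputable def euclNorm {k : ℕ} (v : Fin k → ℝ) : ℝ :=
  ‖(WithLp.equiv 2 (Fin k → ℝ)).symm v‖

/-- Operator norm on matrices induced by the Euclidean norms. -/
noncomputable def matOpNorm {k l : ℕ} (A : Matrix (Fin k) (Fin l) ℝ) : ℝ :=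
  ‖LinearMap.toContinuousLinearMap (Matrix.toEuclideanLin A)‖

/-- The all-ones vector `𝟙`. -/
def onesVec (k : ℕ) : Fin k → ℝ := fun _ => 1

/-- The all-ones matrix `𝟙𝟙ᵀ`. -/
def onesMat (k : ℕ) : Matrix (Fin k) (Fin k) ℝ := Matrix.of fun _ _ => 1

/-- Scalar saturation: `sat(y; l, u) = l` if `y ≤ l`, `u` if `u ≤ y`, and `y` otherwise. -/
noncomputable def sat1 (y l u : ℝ) : ℝ := if y ≤ l then l else if u ≤ y then u else y

/-- Componentwise (multidimensional) saturation function. -/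
noncomputable def satv {k : ℕ} (x xm xp : Fin k → ℝ) : Fin k → ℝ :=
  fun i => sat1 (x i) (xm i) (xp i)

/-! Write `u = Q̄ Q d̃` and `v = (γQ̄ + Φ)⁻¹ Q̄ u`, so that `x̂_p = (γ/γ_p) Q v` and
`x̂ = γ_c 𝟙𝟙ᵀQ⁻¹(u - γ v) / (𝟙ᵀQ⁻¹𝟙)`. Since `𝟙ᵀQ̄ = 0` and `𝟙ᵀΦ = 𝟙ᵀ`, we get
`𝟙ᵀv = 𝟙ᵀ(γQ̄ + Φ)v = 𝟙ᵀQ̄u = 0`, so `γ v ∈ 𝟙^⊥ = Im B` and `x̂_e` is chosen with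
`γ_e B x̂_e = γ v`, which is (ii); (i) holds because `x̂ ∈ span 𝟙 = ker Bᵀ`. For (iii), put
`w = u - γ v`: then `Q⁻¹x̂ = γ_c (Q̄ + Q⁻¹) w`, `γ_e B (x̂_e + x̄_e) = -w`, and, as `Φ = -L_c Q` on
`𝟙^⊥`, `L_c Q v = -Φ v = -Q̄ w`; the three terms cancel because `γ_l γ = γ_p² γ_c`.
`γQ̄ + Φ` is invertible for `γ > 0`: if `(γQ̄ + Φ) x = 0` then `𝟙ᵀx = 0`, and
`0 = (Qx)ᵀ(γQ̄ + Φ)x = -γ |x|² - (Qx)ᵀ L_c (Qx) ≤ -γ |x|²` as the Laplacian is positive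
semidefinite. -/

namespace Matrix

variable {ι κ : Type*} [Fintype ι] [Fintype κ]

structure IsLaplacian {R : Type*} [CommRing R] [LinearOrder R] (L : Matrix ι ι R) : Prop where
  isSymm : L.IsSymm
  nonpos_of_ne : ∀ i j, i ≠ j → L i j ≤ 0
  mulVec_one : L *ᵥ (fun _ => 1) = 0

theorem two_mul_dotProduct_mulVec_eq_sum_sub_sq {R : Type*} [CommRing R] (L : Matrix ι ι R)
    (hL : L.IsSymm) (hrow : L *ᵥ (fun _ => 1) = 0) (z : ι → R) :
    2 * (z ⬝ᵥ (L *ᵥ z)) = ∑ i, ∑ j, -L i j * (z i - z j) ^ 2 := by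
  have hrow' (i : ι) : ∑ j, L i j = 0 := by simpa [mulVec, dotProduct] using congrFun hrow i
  have hdiag : ∑ i, ∑ j, L i j * z i ^ 2 = 0 := by
    simp [← Finset.sum_mul, hrow']
  have hdiag' : ∑ i, ∑ j, L i j * z j ^ 2 = 0 := by
    rw [Finset.sum_comm]
    simp [← hL.apply, ← Finset.sum_mul, hrow']
  have hexpand : z ⬝ᵥ (L *ᵥ z) = ∑ i, ∑ j, L i j * z i * z j := by
    simp [dotProduct, mulVec, Finset.mul_sum, mul_comm, mul_left_comm]
  calc 2 * (z ⬝ᵥ (L *ᵥ z))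
      = 2 * (z ⬝ᵥ (L *ᵥ z)) - ∑ i, ∑ j, L i j * z i ^ 2 - ∑ i, ∑ j, L i j * z j ^ 2 := by
        rw [hdiag, hdiag', sub_zero, sub_zero]
    _ = ∑ i, ∑ j, -L i j * (z i - z j) ^ 2 := by
        simp only [hexpand, Finset.mul_sum, ← Finset.sum_sub_distrib]
        refine Finset.sum_congr rfl fun i _ => Finset.sum_congr rfl fun j _ => ?_
        ring

namespace IsLaplacian

variable {R : Type*} [CommRing R] [LinearOrder R] {L : Matrix ι ι R}

theorem one_vecMul (hL : L.IsLaplacian) : (fun _ => 1) ᵥ* L = 0 := by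
  rw [← hL.isSymm.eq, vecMul_transpose, hL.mulVec_one]

theorem dotProduct_mulVec_nonneg [IsStrictOrderedRing R] (hL : L.IsLaplacian) (z : ι → R) :
    0 ≤ z ⬝ᵥ (L *ᵥ z) := by
  have hsum : 0 ≤ ∑ i, ∑ j, -L i j * (z i - z j) ^ 2 := by
    refine Finset.sum_nonneg fun i _ => Finset.sum_nonneg fun j _ => ?_
    obtain rfl | hij := eq_or_ne i j
    · simp
    · exact mul_nonneg (neg_nonneg.mpr (hL.nonpos_of_ne i j hij)) (sq_nonneg _)
  have h2 := two_mul_dotProduct_mulVec_eq_sum_sub_sq L hL.isSymm hL.mulVec_one z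
  nlinarith

end IsLaplacian

theorem exists_mulVec_eq_of_dotProduct_ker_transpose_eq_zero (B : Matrix ι κ ℝ) (w : ι → ℝ)
    (hw : ∀ y, Bᵀ *ᵥ y = 0 → y ⬝ᵥ w = 0) : ∃ x, B *ᵥ x = w := by
  classical
  have hmem : WithLp.toLp 2 w ∈ (LinearMap.ker (toEuclideanLin Bᵀ))ᗮ := by
    rw [Submodule.mem_orthogonal]
    intro y hy
    rw [LinearMap.mem_ker, toLpLin_apply, WithLp.toLp_eq_zero] at hy
    rw [EuclideanSpace.inner_eq_star_dotProduct]
    simpa [dotProduct_comm] using hw y.ofLp hy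
  rw [LinearMap.orthogonal_ker, ← toEuclideanLin_conjTranspose_eq_adjoint] at hmem
  obtain ⟨x, hx⟩ := hmem
  exact ⟨x.ofLp, by simpa using congrArg WithLp.ofLp hx⟩

theorem mulVec_nonsing_inv_mulVec [DecidableEq ι] {R : Type*} [CommRing R]
    {A : Matrix ι ι R} (hA : IsUnit A) (y : ι → R) : A *ᵥ (A⁻¹ *ᵥ y) = y := by
  rw [mulVec_mulVec, mul_nonsing_inv _ ((isUnit_iff_isUnit_det A).mp hA), one_mulVec]

variable [DecidableEq ι] {K : Type*} [Field K] {q : ι → K}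

theorem diagonal_mulVec_dotProduct_diagonal_inv_mulVec (hq : ∀ i, q i ≠ 0) (x y : ι → K) :
    (diagonal q *ᵥ x) ⬝ᵥ (diagonal q⁻¹ *ᵥ y) = x ⬝ᵥ y := by
  refine Finset.sum_congr rfl fun i _ => ?_
  simp only [mulVec_diagonal, Pi.inv_apply]
  field_simp [hq i]

theorem diagonal_inv_mulVec_diagonal_mulVec (hq : ∀ i, q i ≠ 0) (x : ι → K) :
    diagonal q⁻¹ *ᵥ (diagonal q *ᵥ x) = x := by
  ext i
  simp [mulVec_diagonal, hq i]

end Matrix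

theorem onesMat_mulVec {n : ℕ} (x : Fin n → ℝ) :
    onesMat n *ᵥ x = (onesVec n ⬝ᵥ x) • onesVec n := by
  ext i
  simp [onesMat, onesVec, mulVec, dotProduct]

theorem exists_mulVec_eq_of_ker_transpose_eq_span_onesVec {n m : ℕ}
    {B : Matrix (Fin n) (Fin m) ℝ}
    (hB : LinearMap.ker Bᵀ.mulVecLin = Submodule.span ℝ {onesVec n}) {w : Fin n → ℝ}
    (hw : onesVec n ⬝ᵥ w = 0) : ∃ x, B *ᵥ x = w := by
  refine exists_mulVec_eq_of_dotProduct_ker_transpose_eq_zero B w fun y hy => ?_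
  have hy' : y ∈ LinearMap.ker Bᵀ.mulVecLin := hy
  rw [hB] at hy'
  obtain ⟨c, rfl⟩ := Submodule.mem_span_singleton.mp hy'
  rw [smul_dotProduct, hw, smul_zero]

theorem onesVec_dotProduct_diagonal_inv_mulVec_pos {n : ℕ} (hn : n ≠ 0) {q : Fin n → ℝ}
    (hq : ∀ i, 0 < q i) : 0 < onesVec n ⬝ᵥ (diagonal q⁻¹ *ᵥ onesVec n) := by
  have : Nonempty (Fin n) := Fin.pos_iff_nonempty.mp (Nat.pos_of_ne_zero hn)
  simpa [dotProduct, onesVec, mulVec_diagonal] using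
    Finset.sum_pos (fun i _ => inv_pos.mpr (hq i)) Finset.univ_nonempty

noncomputable def qbarMatrix {n : ℕ} (q : Fin n → ℝ) : Matrix (Fin n) (Fin n) ℝ :=
  (onesVec n ⬝ᵥ (diagonal q⁻¹ *ᵥ onesVec n))⁻¹ • (diagonal q⁻¹ * onesMat n * diagonal q⁻¹)
    - diagonal q⁻¹

noncomputable def phiMatrix {n : ℕ} (L : Matrix (Fin n) (Fin n) ℝ) (q : Fin n → ℝ) :
    Matrix (Fin n) (Fin n) ℝ :=
  -(L * diagonal q) + (n : ℝ)⁻¹ • onesMat n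

noncomputable def qbarResolvent {n : ℕ} (γ : ℝ) (L : Matrix (Fin n) (Fin n) ℝ)
    (q : Fin n → ℝ) (y : Fin n → ℝ) : Fin n → ℝ :=
  (γ • qbarMatrix q + phiMatrix L q)⁻¹ *ᵥ (qbarMatrix q *ᵥ y)

section

variable {n : ℕ} {q : Fin n → ℝ}

theorem qbarMatrix_mulVec (x : Fin n → ℝ) :
    qbarMatrix q *ᵥ x = ((onesVec n ⬝ᵥ (diagonal q⁻¹ *ᵥ onesVec n))⁻¹ *
      (onesVec n ⬝ᵥ (diagonal q⁻¹ *ᵥ x))) • (diagonal q⁻¹ *ᵥ onesVec n) -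
      diagonal q⁻¹ *ᵥ x := by
  rw [qbarMatrix, sub_mulVec, smul_mulVec, ← mulVec_mulVec, ← mulVec_mulVec, onesMat_mulVec,
    mulVec_smul, smul_smul]

theorem qbarMatrix_add_diagonal_inv_mulVec (x : Fin n → ℝ) :
    (qbarMatrix q + diagonal q⁻¹) *ᵥ x = diagonal q⁻¹ *ᵥ
      ((onesVec n ⬝ᵥ (diagonal q⁻¹ *ᵥ onesVec n))⁻¹ • (onesMat n *ᵥ (diagonal q⁻¹ *ᵥ x))) := by
  rw [qbarMatrix, sub_add_cancel, mulVec_smul, smul_mulVec, mulVec_mulVec, mulVec_mulVec,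
    mul_assoc]

theorem onesVec_dotProduct_qbarMatrix_mulVec
    (hs : onesVec n ⬝ᵥ (diagonal q⁻¹ *ᵥ onesVec n) ≠ 0) (x : Fin n → ℝ) :
    onesVec n ⬝ᵥ (qbarMatrix q *ᵥ x) = 0 := by
  rw [qbarMatrix_mulVec, dotProduct_sub, dotProduct_smul, smul_eq_mul, inv_mul_eq_div,
    div_mul_cancel₀ _ hs, sub_self]

theorem diagonal_mulVec_dotProduct_qbarMatrix_mulVec (hq : ∀ i, q i ≠ 0) {x : Fin n → ℝ}
    (hx : onesVec n ⬝ᵥ x = 0) : (diagonal q *ᵥ x) ⬝ᵥ (qbarMatrix q *ᵥ x) = -(x ⬝ᵥ x) := by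
  rw [qbarMatrix_mulVec, dotProduct_sub, dotProduct_smul,
    diagonal_mulVec_dotProduct_diagonal_inv_mulVec hq,
    diagonal_mulVec_dotProduct_diagonal_inv_mulVec hq, dotProduct_comm x, hx, smul_zero,
    zero_sub]

theorem onesVec_dotProduct_phiMatrix_mulVec (hn : n ≠ 0) {L : Matrix (Fin n) (Fin n) ℝ}
    (hL : onesVec n ᵥ* L = 0) (x : Fin n → ℝ) :
    onesVec n ⬝ᵥ (phiMatrix L q *ᵥ x) = onesVec n ⬝ᵥ x := by
  have hnn : onesVec n ⬝ᵥ onesVec n = n := by simp [onesVec, dotProduct]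
  rw [phiMatrix, add_mulVec, neg_mulVec, smul_mulVec, onesMat_mulVec, dotProduct_add,
    dotProduct_neg, dotProduct_mulVec, ← vecMul_vecMul, hL, zero_vecMul, zero_dotProduct,
    neg_zero, zero_add, dotProduct_smul, dotProduct_smul, hnn, smul_eq_mul, smul_eq_mul]
  field_simp

theorem phiMatrix_mulVec_of_onesVec_dotProduct_eq_zero (L : Matrix (Fin n) (Fin n) ℝ)
    {x : Fin n → ℝ} (hx : onesVec n ⬝ᵥ x = 0) :
    phiMatrix L q *ᵥ x = -(L *ᵥ (diagonal q *ᵥ x)) := by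
  rw [phiMatrix, add_mulVec, neg_mulVec, smul_mulVec, onesMat_mulVec, hx, zero_smul,
    smul_zero, add_zero, mulVec_mulVec]

theorem onesVec_dotProduct_smul_qbarMatrix_add_phiMatrix_mulVec (hn : n ≠ 0)
    (hq : ∀ i, 0 < q i) {L : Matrix (Fin n) (Fin n) ℝ} (hL : onesVec n ᵥ* L = 0) (γ : ℝ)
    (x : Fin n → ℝ) :
    onesVec n ⬝ᵥ ((γ • qbarMatrix q + phiMatrix L q) *ᵥ x) = onesVec n ⬝ᵥ x := by
  rw [add_mulVec, dotProduct_add, smul_mulVec, dotProduct_smul,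
    onesVec_dotProduct_qbarMatrix_mulVec (onesVec_dotProduct_diagonal_inv_mulVec_pos hn hq).ne',
    smul_zero, zero_add, onesVec_dotProduct_phiMatrix_mulVec hn hL]

theorem isUnit_smul_qbarMatrix_add_phiMatrix (hn : n ≠ 0) (hq : ∀ i, 0 < q i)
    {L : Matrix (Fin n) (Fin n) ℝ} (hL : L.IsLaplacian) {γ : ℝ} (hγ : 0 < γ) :
    IsUnit (γ • qbarMatrix q + phiMatrix L q) := by
  have hker (x : Fin n → ℝ) (hx : (γ • qbarMatrix q + phiMatrix L q) *ᵥ x = 0) : x = 0 := by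
    have hx1 : onesVec n ⬝ᵥ x = 0 := by
      rw [← onesVec_dotProduct_smul_qbarMatrix_add_phiMatrix_mulVec hn hq hL.one_vecMul γ, hx,
        dotProduct_zero]
    have hquad : (diagonal q *ᵥ x) ⬝ᵥ ((γ • qbarMatrix q + phiMatrix L q) *ᵥ x)
        = -(γ * (x ⬝ᵥ x)) - (diagonal q *ᵥ x) ⬝ᵥ (L *ᵥ (diagonal q *ᵥ x)) := by
      rw [add_mulVec, dotProduct_add, smul_mulVec, dotProduct_smul,
        diagonal_mulVec_dotProduct_qbarMatrix_mulVec (fun i => (hq i).ne') hx1,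
        phiMatrix_mulVec_of_onesVec_dotProduct_eq_zero L hx1, dotProduct_neg, smul_eq_mul]
      ring
    have hLpsd := hL.dotProduct_mulVec_nonneg (diagonal q *ᵥ x)
    have hxx : 0 ≤ x ⬝ᵥ x := Fintype.sum_nonneg fun i => mul_self_nonneg (x i)
    rw [hx, dotProduct_zero] at hquad
    exact dotProduct_self_eq_zero.mp (by nlinarith)
  exact mulVec_injective_iff_isUnit.mp fun x y hxy =>
    sub_eq_zero.mp (hker _ (by rw [mulVec_sub, hxy, sub_self]))

theorem onesVec_dotProduct_qbarResolvent (hn : n ≠ 0) (hq : ∀ i, 0 < q i)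
    {L : Matrix (Fin n) (Fin n) ℝ} (hL : L.IsLaplacian) {γ : ℝ} (hγ : 0 < γ) (y : Fin n → ℝ) :
    onesVec n ⬝ᵥ qbarResolvent γ L q y = 0 := by
  rw [← onesVec_dotProduct_smul_qbarMatrix_add_phiMatrix_mulVec hn hq hL.one_vecMul γ,
    qbarResolvent, mulVec_nonsing_inv_mulVec (isUnit_smul_qbarMatrix_add_phiMatrix hn hq hL hγ),
    onesVec_dotProduct_qbarMatrix_mulVec (onesVec_dotProduct_diagonal_inv_mulVec_pos hn hq).ne']

theorem mulVec_diagonal_mulVec_qbarResolvent (hn : n ≠ 0) (hq : ∀ i, 0 < q i)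
    {L : Matrix (Fin n) (Fin n) ℝ} (hL : L.IsLaplacian) {γ : ℝ} (hγ : 0 < γ) (y : Fin n → ℝ) :
    L *ᵥ (diagonal q *ᵥ qbarResolvent γ L q y) =
      -(qbarMatrix q *ᵥ (y - γ • qbarResolvent γ L q y)) := by
  have hΦ : phiMatrix L q *ᵥ qbarResolvent γ L q y =
      qbarMatrix q *ᵥ (y - γ • qbarResolvent γ L q y) := by
    rw [mulVec_sub, mulVec_smul, ← mulVec_nonsing_inv_mulVec
      (isUnit_smul_qbarMatrix_add_phiMatrix hn hq hL hγ) (qbarMatrix q *ᵥ y),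
      ← qbarResolvent, add_mulVec, smul_mulVec, add_sub_cancel_left]
  rw [← hΦ, phiMatrix_mulVec_of_onesVec_dotProduct_eq_zero L
    (onesVec_dotProduct_qbarResolvent hn hq hL hγ y), neg_neg]

end

theorem lemma41_hat_solutions_exist_general {n m : ℕ} (hn : 2 ≤ n)
    (q : Fin n → ℝ) (hq : ∀ i, 0 < q i)
    (Lc : Matrix (Fin n) (Fin n) ℝ) (hsymm : Lc.IsSymm)
    (hoff : ∀ i j, i ≠ j → Lc i j ≤ 0)
    (hLc1 : Lc *ᵥ onesVec n = 0)
    (B : Matrix (Fin n) (Fin m) ℝ)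
    (hB : LinearMap.ker Bᵀ.mulVecLin = Submodule.span ℝ {onesVec n})
    (γc γe γp γl : ℝ) (hγc : 0 < γc) (hγe : 0 < γe) (hγp : 0 < γp) (hγl : 0 < γl)
    (γ : ℝ) (hγ : γ = γp ^ 2 * γc / γl)
    (Q Qinv Qbar Φ : Matrix (Fin n) (Fin n) ℝ)
    (hQ : Q = Matrix.diagonal q)
    (hQinv : Qinv = Matrix.diagonal fun i => (q i)⁻¹)
    (dtil : Fin n → ℝ)
    (hQbar : Qbar =
      (onesVec n ⬝ᵥ (Qinv *ᵥ onesVec n))⁻¹ • (Qinv * onesMat n * Qinv) - Qinv)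
    (hΦ : Φ = -(Lc * Q) + (n : ℝ)⁻¹ • onesMat n)
    (xbare : Fin m → ℝ)
    (hxbare : γe • (B *ᵥ xbare) = -((Qbar * Q) *ᵥ dtil))
    (xhatp xhat : Fin n → ℝ)
    (hxhatp : xhatp =
      (γ / γp) • (Q *ᵥ ((γ • Qbar + Φ)⁻¹ *ᵥ ((Qbar * Qbar * Q) *ᵥ dtil))))
    (hxhat : xhat = γc • ((onesVec n ⬝ᵥ (Qinv *ᵥ onesVec n))⁻¹ •
      ((onesMat n * Qinv) *ᵥ
        ((1 - γ • ((γ • Qbar + Φ)⁻¹ * Qbar)) *ᵥ ((Qbar * Q) *ᵥ dtil))))) :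
    ∃ xhate : Fin m → ℝ,
      Bᵀ *ᵥ xhat = 0 ∧
      -(γe • (B *ᵥ xhate)) + γp • (Qinv *ᵥ xhatp) = 0 ∧
      -(γp • (Qinv *ᵥ xhat)) - γl • (Lc *ᵥ xhatp)
        - (γp * γc * γe) • (Qinv *ᵥ (B *ᵥ (xhate + xbare))) = 0 := by
  subst hQ hxhatp hxhat
  obtain rfl : Qinv = diagonal q⁻¹ := hQinv
  obtain rfl : Qbar = qbarMatrix q := hQbar
  obtain rfl : Φ = phiMatrix Lc q := hΦ
  have hn0 : n ≠ 0 := by omega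
  have hγpos : 0 < γ := by rw [hγ]; positivity
  have hL : Lc.IsLaplacian := ⟨hsymm, hoff, hLc1⟩
  simp only [← mulVec_mulVec, sub_mulVec, one_mulVec, smul_mulVec, ← qbarResolvent.eq_1]
    at hxbare ⊢
  set u := qbarMatrix q *ᵥ (diagonal q *ᵥ dtil)
  set v := qbarResolvent γ Lc q u
  obtain ⟨xhate, hxhate⟩ : ∃ x, B *ᵥ x = (γ / γe) • v :=
    exists_mulVec_eq_of_ker_transpose_eq_span_onesVec hB <| by
      rw [dotProduct_smul, onesVec_dotProduct_qbarResolvent hn0 hq hL hγpos, smul_zero]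
  refine ⟨xhate, ?_, ?_, ?_⟩
  · have hB1 : Bᵀ *ᵥ onesVec n = 0 :=
      LinearMap.mem_ker.mp (hB.ge (Submodule.mem_span_singleton_self _))
    simp only [onesMat_mulVec, mulVec_smul, hB1, smul_zero]
  · rw [hxhate, mulVec_smul, diagonal_inv_mulVec_diagonal_mulVec fun i => (hq i).ne', smul_smul,
      smul_smul, mul_div_cancel₀ _ hγe.ne', mul_div_cancel₀ _ hγp.ne', neg_add_cancel]
  · have hLxp : γl • (Lc *ᵥ ((γ / γp) • (diagonal q *ᵥ v))) =
        -((γp * γc) • (qbarMatrix q *ᵥ (u - γ • v))) := by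
      rw [mulVec_smul, smul_smul, show γl * (γ / γp) = γp * γc by rw [hγ]; field_simp,
        mulVec_diagonal_mulVec_qbarResolvent hn0 hq hL hγpos, smul_neg]
    have hBx : (γp * γc * γe) • (diagonal q⁻¹ *ᵥ (B *ᵥ (xhate + xbare))) =
        -((γp * γc) • (diagonal q⁻¹ *ᵥ (u - γ • v))) := by
      rw [mul_smul, ← mulVec_smul _ γe, mulVec_add, smul_add, hxbare, hxhate, smul_smul,
        mul_div_cancel₀ _ hγe.ne', ← sub_eq_add_neg, ← neg_sub, mulVec_neg, smul_neg]
    rw [mulVec_smul, ← qbarMatrix_add_diagonal_inv_mulVec, hLxp, hBx, add_mulVec]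
    module

/-- Lemma 4.1: existence of `x̂_e` such that `(x̂, x̂_e, x̂_p)` solves the
steady-state-deviation equations (A.hatsss) of the constrained closed loop. -/
theorem lemma41_hat_solutions_exist {n m : ℕ} (hn : 2 ≤ n)
    (q : Fin n → ℝ) (hq : ∀ i, 0 < q i)
    (Lc : Matrix (Fin n) (Fin n) ℝ) (hsymm : Lc.IsSymm)
    (hoff : ∀ i j, i ≠ j → Lc i j ≤ 0)
    (hLc1 : Lc *ᵥ onesVec n = 0)
    (hkerLc : LinearMap.ker Lc.mulVecLin = Submodule.span ℝ {onesVec n})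
    (B : Matrix (Fin n) (Fin m) ℝ)
    (hB : LinearMap.ker Bᵀ.mulVecLin = Submodule.span ℝ {onesVec n})
    (γc γe γp γl : ℝ) (hγc : 0 < γc) (hγe : 0 < γe) (hγp : 0 < γp) (hγl : 0 < γl)
    (γ : ℝ) (hγ : γ = γp ^ 2 * γc / γl)
    (d xbars r : Fin n → ℝ)
    (Q Qinv Qbar Φ : Matrix (Fin n) (Fin n) ℝ)
    (hQ : Q = Matrix.diagonal q)
    (hQinv : Qinv = Matrix.diagonal fun i => (q i)⁻¹)
    (dtil : Fin n → ℝ) (hdtil : dtil = d - xbars - Qinv *ᵥ r)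
    (hQbar : Qbar =
      (onesVec n ⬝ᵥ (Qinv *ᵥ onesVec n))⁻¹ • (Qinv * onesMat n * Qinv) - Qinv)
    (hΦ : Φ = -(Lc * Q) + (n : ℝ)⁻¹ • onesMat n)
    (xbare : Fin m → ℝ)
    (hxbare : γe • (B *ᵥ xbare) = -((Qbar * Q) *ᵥ dtil))
    (xhatp xhat : Fin n → ℝ)
    (hxhatp : xhatp =
      (γ / γp) • (Q *ᵥ ((γ • Qbar + Φ)⁻¹ *ᵥ ((Qbar * Qbar * Q) *ᵥ dtil))))
    (hxhat : xhat = γc • ((onesVec n ⬝ᵥ (Qinv *ᵥ onesVec n))⁻¹ •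
      ((onesMat n * Qinv) *ᵥ
        ((1 - γ • ((γ • Qbar + Φ)⁻¹ * Qbar)) *ᵥ ((Qbar * Q) *ᵥ dtil))))) :
    ∃ xhate : Fin m → ℝ,
      Bᵀ *ᵥ xhat = 0 ∧
      -(γe • (B *ᵥ xhate)) + γp • (Qinv *ᵥ xhatp) = 0 ∧
      -(γp • (Qinv *ᵥ xhat)) - γl • (Lc *ᵥ xhatp)
        - (γp * γc * γe) • (Qinv *ᵥ (B *ᵥ (xhate + xbare))) = 0 :=
  lemma41_hat_solutions_exist_general hn q hq Lc hsymm hoff hLc1 B hB γc γe γp γl hγc hγe hγp hγl γ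
    hγ Q Qinv Qbar Φ hQ hQinv dtil hQbar hΦ xbare hxbare xhatp xhat hxhatp hxhat
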